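/- arXiv:2605.06870 — 2 statements merged into one kernel-verified Lean document; each statement's English description precedes it below -/
import Mathlib

section
/- Let σ > 0, β > 0, c ∈ [0,1], D > 0 be constants, and define the vector field F(u, v) = 2σ² v (1 − c u v) − 2βD/u and G(u, v) = 2σ² c u (1 − u v) on (0,∞) × ℝ. Then the symmetry condition ∂F/∂v (u, v) = ∂G/∂u (u, v) holds for all (u, v) in the domain if and only if c = 1. In particular, for c ≠ 1 the diagonal RD-AE flow is not the gradient flow of any C² potential. -/
/-!
The off-diagonal Jacobian entries `∂F/∂v = 2σ²(1 - 2cuv)` and `∂G/∂u = 2σ²c(1 - 2uv)` differ by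
`2σ²(1 - c)`. If `(F, G) = -∇Φ` for a `C²` potential `Φ`, both entries are mixed second partials
of `-Φ`, which agree by Schwarz's theorem; hence `c = 1`.
-/

open Filter Topology

section MixedPartials

variable {x y : ℝ}

lemma hasDerivAt_partial_fst {E : Type*} [NormedAddCommGroup E] [NormedSpace ℝ E]
    {f : ℝ × ℝ → E} (hf : DifferentiableAt ℝ f (x, y)) :
    HasDerivAt (fun x' => f (x', y)) (fderiv ℝ f (x, y) (1, 0)) x :=
  hf.hasFDerivAt.comp_hasDerivAt x ((hasDerivAt_id x).prodMk (hasDerivAt_const x y))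

lemma hasDerivAt_partial_snd {E : Type*} [NormedAddCommGroup E] [NormedSpace ℝ E]
    {f : ℝ × ℝ → E} (hf : DifferentiableAt ℝ f (x, y)) :
    HasDerivAt (fun y' => f (x, y')) (fderiv ℝ f (x, y) (0, 1)) y :=
  hf.hasFDerivAt.comp_hasDerivAt y ((hasDerivAt_const y x).prodMk (hasDerivAt_id y))

theorem ContDiffAt.deriv_partial_comm {f : ℝ × ℝ → ℝ} (hf : ContDiffAt ℝ 2 f (x, y)) :
    deriv (fun y' => deriv (fun x' => f (x', y')) x) y =
      deriv (fun x' => deriv (fun y' => f (x', y')) y) x := by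
  have hdiff : ∀ᶠ p in 𝓝 (x, y), DifferentiableAt ℝ f p :=
    (hf.eventually (by simp)).mono fun p hp => hp.differentiableAt two_ne_zero
  have hf' : DifferentiableAt ℝ (fderiv ℝ f) (x, y) :=
    (hf.fderiv_right (m := 1) le_rfl).differentiableAt one_ne_zero
  have hfst : (fun y' => deriv (fun x' => f (x', y')) x) =ᶠ[𝓝 y]
      fun y' => fderiv ℝ f (x, y') (1, 0) :=
    ((continuous_const.prodMk continuous_id).tendsto y |>.eventually hdiff).mono
      fun y' hy' => (hasDerivAt_partial_fst hy').deriv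
  have hsnd : (fun x' => deriv (fun y' => f (x', y')) y) =ᶠ[𝓝 x]
      fun x' => fderiv ℝ f (x', y) (0, 1) :=
    ((continuous_id.prodMk continuous_const).tendsto x |>.eventually hdiff).mono
      fun x' hx' => (hasDerivAt_partial_snd hx').deriv
  rw [hfst.deriv_eq, hsnd.deriv_eq,
    ((hasDerivAt_partial_snd hf').clm_apply (hasDerivAt_const y _)).deriv,
    ((hasDerivAt_partial_fst hf').clm_apply (hasDerivAt_const x _)).deriv]
  simpa using hf.isSymmSndFDerivAt (by simp) (0, 1) (1, 0)

lemma ContDiffOn.deriv_snd_eq_deriv_fst_of_partials {Φ : ℝ × ℝ → ℝ} {P Q : ℝ → ℝ → ℝ}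
    {s : Set (ℝ × ℝ)} (hs : IsOpen s) (hΦ : ContDiffOn ℝ 2 Φ s)
    (hP : ∀ p ∈ s, deriv (fun x' => Φ (x', p.2)) p.1 = P p.1 p.2)
    (hQ : ∀ p ∈ s, deriv (fun y' => Φ (p.1, y')) p.2 = Q p.1 p.2) (hxy : (x, y) ∈ s) :
    deriv (P x) y = deriv (fun x' => Q x' y) x := by
  have hP' : (fun y' => deriv (fun x' => Φ (x', y')) x) =ᶠ[𝓝 y] P x :=
    ((continuous_const.prodMk continuous_id).tendsto y |>.eventually (hs.mem_nhds hxy)).mono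
      fun y' hy' => hP _ hy'
  have hQ' : (fun x' => deriv (fun y' => Φ (x', y')) y) =ᶠ[𝓝 x] fun x' => Q x' y :=
    ((continuous_id.prodMk continuous_const).tendsto x |>.eventually (hs.mem_nhds hxy)).mono
      fun x' hx' => hQ _ hx'
  rw [← hP'.deriv_eq, ← hQ'.deriv_eq]
  exact (hΦ.contDiffAt (hs.mem_nhds hxy)).deriv_partial_comm

end MixedPartials

noncomputable def rdaeF (σ β c D u v : ℝ) : ℝ := 2 * σ ^ 2 * v * (1 - c * u * v) - 2 * β * D / u

noncomputable def rdaeG (σ c u v : ℝ) : ℝ := 2 * σ ^ 2 * c * u * (1 - u * v)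

lemma hasDerivAt_rdaeF_snd (σ β c D u v : ℝ) :
    HasDerivAt (rdaeF σ β c D u) (2 * σ ^ 2 * (1 - 2 * c * u * v)) v := by
  refine ((((hasDerivAt_id' v).const_mul (2 * σ ^ 2)).mul
    (((hasDerivAt_id' v).const_mul (c * u)).const_sub 1)).sub_const (2 * β * D / u)).congr_deriv ?_
  ring

lemma hasDerivAt_rdaeG_fst (σ c u v : ℝ) :
    HasDerivAt (fun u' => rdaeG σ c u' v) (2 * σ ^ 2 * c * (1 - 2 * u * v)) u := by
  refine (((hasDerivAt_id' u).const_mul (2 * σ ^ 2 * c)).mul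
    (((hasDerivAt_id' u).mul_const v).const_sub 1)).congr_deriv ?_
  ring

lemma rdae_symmetric_iff {σ : ℝ} (hσ : σ ≠ 0) (β c D : ℝ) :
    (∀ u v : ℝ, 0 < u →
      deriv (rdaeF σ β c D u) v = deriv (fun u' => rdaeG σ c u' v) u) ↔ c = 1 := by
  simp only [(hasDerivAt_rdaeF_snd _ _ _ _ _ _).deriv, (hasDerivAt_rdaeG_fst _ _ _ _).deriv]
  refine ⟨fun h => ?_, fun hc u v _ => by rw [hc]; ring⟩
  have : σ ^ 2 * (1 - c) = 0 := by linarith [h 1 0 one_pos]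
  exact (sub_eq_zero.1 ((mul_eq_zero.1 this).resolve_left (pow_ne_zero 2 hσ))).symm

theorem rdae_not_gradient_flow_general (σ β c D : ℝ) (hσ : 0 < σ) :
    let F : ℝ → ℝ → ℝ := fun u v => 2 * σ ^ 2 * v * (1 - c * u * v) - 2 * β * D / u
    let G : ℝ → ℝ → ℝ := fun u v => 2 * σ ^ 2 * c * u * (1 - u * v)
    ((∀ u v : ℝ, 0 < u →
        deriv (fun w => F u w) v = deriv (fun w => G w v) u) ↔ c = 1) ∧
    (c ≠ 1 → ¬ ∃ Φ : ℝ × ℝ → ℝ,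
      ContDiffOn ℝ 2 Φ {p : ℝ × ℝ | 0 < p.1} ∧
      ∀ u v : ℝ, 0 < u →
        deriv (fun x => Φ (x, v)) u = -F u v ∧
        deriv (fun y => Φ (u, y)) v = -G u v) := by
  intro F G
  have hsymm := rdae_symmetric_iff hσ.ne' β c D
  refine ⟨hsymm, fun hc ⟨Φ, hΦ, hgrad⟩ => hc (hsymm.1 fun u v hu => ?_)⟩
  have := hΦ.deriv_snd_eq_deriv_fst_of_partials (P := fun u v => -F u v)
    (Q := fun u v => -G u v) (isOpen_lt continuous_const continuous_fst)
    (fun p hp => (hgrad p.1 p.2 hp).1) (fun p hp => (hgrad p.1 p.2 hp).2) (x := u) (y := v) hu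
  show deriv (fun w => F u w) v = deriv (fun w => G w v) u
  simpa only [deriv.fun_neg, neg_inj] using this

/-- **The diagonal RD-AE flow is not a gradient flow unless `c = 1`.**
For the vector field `F(u,v) = 2σ²v(1 − c u v) − 2βD/u`,
`G(u,v) = 2σ² c u (1 − u v)` on `(0,∞) × ℝ`, the symmetry condition
`∂F/∂v = ∂G/∂u` holds everywhere on the domain iff `c = 1`; in particular, for
`c ≠ 1` the flow is not the gradient flow of any `C²` potential. -/
theorem rdae_not_gradient_flow (σ β c D : ℝ) (hσ : 0 < σ) (hβ : 0 < β)
    (hc : c ∈ Set.Icc (0 : ℝ) 1) (hD : 0 < D) :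
    let F : ℝ → ℝ → ℝ := fun u v => 2 * σ ^ 2 * v * (1 - c * u * v) - 2 * β * D / u
    let G : ℝ → ℝ → ℝ := fun u v => 2 * σ ^ 2 * c * u * (1 - u * v)
    ((∀ u v : ℝ, 0 < u →
        deriv (fun w => F u w) v = deriv (fun w => G w v) u) ↔ c = 1) ∧
    (c ≠ 1 → ¬ ∃ Φ : ℝ × ℝ → ℝ,
      ContDiffOn ℝ 2 Φ {p : ℝ × ℝ | 0 < p.1} ∧
      ∀ u v : ℝ, 0 < u →
        deriv (fun x => Φ (x, v)) u = -F u v ∧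
        deriv (fun y => Φ (u, y)) v = -G u v) :=
  rdae_not_gradient_flow_general σ β c D hσ
end

section
/- Let d ≥ 1, σ₁² ≥ σ₂² ≥ … ≥ σ_d² > 0, R > 0, and define δ_m(R) = (∏_{i=1}^m σ_i²)^{1/m} · 2^{−2R/m} for 1 ≤ m ≤ d. Suppose 1 ≤ k ≤ m ≤ d and δ_k(R) ≤ σ_k². Then k·δ_k(R) + Σ_{j=k+1}^d σ_j² ≥ m·δ_m(R) + Σ_{j=m+1}^d σ_j²; equivalently, the distortion of the scheme that water-fills rate R over only the top k modes and drops the rest is at least that of the scheme water-filling over the top m modes. -/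
/-!
Writing `δₙ = (2^{-2R} σ₁² ⋯ σₙ²)^{1/n}`, one has `δₙ₊₁^{n+1} = δₙⁿ · σ²ₙ₊₁`, so the weighted
AM-GM inequality with weights `n/(n+1)` and `1/(n+1)` gives `(n+1) δₙ₊₁ ≤ n δₙ + σ²ₙ₊₁`.
Summing these steps from `k` to `m` yields `m δₘ ≤ k δₖ + Σ_{k<j≤m} σⱼ²`, which is the claim.
-/

open Finset

theorem succ_mul_rpow_inv_le {x a : ℝ} (hx : 0 ≤ x) (ha : 0 ≤ a) (n : ℕ) :
    (n + 1) * (x ^ n * a) ^ ((n + 1 : ℝ)⁻¹) ≤ n * x + a := by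
  have hw : (n : ℝ) / (n + 1) + 1 / (n + 1) = 1 := by field_simp
  have amgm := Real.geom_mean_le_arith_mean2_weighted (by positivity) (by positivity) hx ha hw
  calc (n + 1) * (x ^ n * a) ^ ((n + 1 : ℝ)⁻¹)
      = (n + 1) * (x ^ ((n : ℝ) / (n + 1)) * a ^ (1 / (n + 1 : ℝ))) := by
        rw [Real.mul_rpow (by positivity) ha, ← Real.rpow_natCast, ← Real.rpow_mul hx,
          div_eq_mul_inv, one_div]
    _ ≤ (n + 1) * ((n : ℝ) / (n + 1) * x + 1 / (n + 1) * a) := by gcongr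
    _ = n * x + a := by field_simp

/-- With `c = 2^{-2R}` this is the water level `δₙ(R)`. At `n = 0` the exponent is `0⁻¹ = 0`. -/
noncomputable def scaledGeomMean (c : ℝ) (a : ℕ → ℝ) (n : ℕ) : ℝ :=
  (c * ∏ i ∈ range n, a i) ^ ((n : ℝ)⁻¹)

section scaledGeomMean

variable {c : ℝ} {a : ℕ → ℝ}

theorem scaledGeomMean_succ (hc : 0 ≤ c) {n : ℕ} (hn : n ≠ 0) (ha : ∀ i < n, 0 ≤ a i) :
    scaledGeomMean c a (n + 1) = (scaledGeomMean c a n ^ n * a n) ^ ((n + 1 : ℝ)⁻¹) := by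
  have hP : 0 ≤ c * ∏ i ∈ range n, a i :=
    mul_nonneg hc (prod_nonneg fun i hi => ha i (mem_range.mp hi))
  rw [scaledGeomMean, scaledGeomMean, Real.rpow_inv_natCast_pow hP hn, prod_range_succ,
    mul_assoc]
  push_cast
  rfl

theorem succ_mul_scaledGeomMean_le (hc : 0 ≤ c) {n : ℕ} (hn : n ≠ 0) (ha : ∀ i ≤ n, 0 ≤ a i) :
    (n + 1 : ℕ) * scaledGeomMean c a (n + 1) ≤ n * scaledGeomMean c a n + a n := by
  have ha' : ∀ i < n, 0 ≤ a i := fun i hi => ha i hi.le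
  have hG : 0 ≤ scaledGeomMean c a n :=
    Real.rpow_nonneg (mul_nonneg hc (prod_nonneg fun i hi => ha' i (mem_range.mp hi))) _
  rw [scaledGeomMean_succ hc hn ha']
  push_cast
  exact succ_mul_rpow_inv_le hG (ha n le_rfl) n

theorem natCast_mul_scaledGeomMean_le_add_sum (hc : 0 ≤ c) {k n : ℕ} (hk : k ≠ 0) (hkn : k ≤ n)
    (ha : ∀ i < n, 0 ≤ a i) :
    n * scaledGeomMean c a n ≤ k * scaledGeomMean c a k + ∑ j ∈ Ico k n, a j := by
  induction n, hkn using Nat.le_induction with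
  | base => simp
  | succ n hkn ih =>
    have hstep := succ_mul_scaledGeomMean_le hc (n := n) (by omega) fun i hi => ha i (by omega)
    have hprev := ih fun i hi => ha i (by omega)
    rw [sum_Ico_succ_top hkn]
    linarith

end scaledGeomMean

theorem truncated_water_filling_monotone_general (d : ℕ) (σsq : ℕ → ℝ)
    (hpos : ∀ j, j < d → 0 < σsq j)
    (R : ℝ) (k m : ℕ) (hk : 1 ≤ k) (hkm : k ≤ m) (hmd : m ≤ d) :
    let δ : ℕ → ℝ := fun n =>
      (∏ i ∈ Finset.range n, σsq i) ^ ((1 : ℝ) / n) * (2 : ℝ) ^ (-2 * R / n)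
    δ k ≤ σsq (k - 1) →
    k * δ k + ∑ j ∈ Finset.Ico k d, σsq j ≥
      m * δ m + ∑ j ∈ Finset.Ico m d, σsq j := by
  intro δ _
  have hδ : ∀ n ≤ d, δ n = scaledGeomMean (2 ^ (-2 * R)) σsq n := by
    intro n hn
    have hP : 0 ≤ ∏ i ∈ range n, σsq i :=
      prod_nonneg fun i hi => (hpos i ((mem_range.mp hi).trans_le hn)).le
    rw [scaledGeomMean, Real.mul_rpow (by positivity) hP, ← Real.rpow_mul (by norm_num),
      mul_comm]
    simp only [δ, div_eq_mul_inv, one_mul]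
  have htelescope := natCast_mul_scaledGeomMean_le_add_sum (c := 2 ^ (-2 * R)) (a := σsq)
    (by positivity) (by omega) hkm fun i hi => (hpos i (by omega)).le
  rw [hδ k (hkm.trans hmd), hδ m hmd, ← sum_Ico_consecutive _ hkm hmd]
  linarith

/-- **Water-filling over more top modes never hurts.**
For a nonincreasing spectrum `σ₁² ≥ … ≥ σ_d² > 0` (0-indexed as `σsq 0, …, σsq (d−1)`),
rate `R > 0`, `1 ≤ k ≤ m ≤ d`, and feasibility `δ_k(R) ≤ σ_k²`, the distortion of
water-filling rate `R` over only the top `k` modes, `k·δ_k(R) + Σ_{j>k} σ_j²`, is at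
least that of water-filling over the top `m` modes, where
`δ_n(R) = (∏_{i=1}^n σᵢ²)^{1/n}·2^{−2R/n}`. -/
theorem truncated_water_filling_monotone (d : ℕ) (hd : 1 ≤ d) (σsq : ℕ → ℝ)
    (hpos : ∀ j, j < d → 0 < σsq j)
    (hmono : ∀ i j, i ≤ j → j < d → σsq j ≤ σsq i)
    (R : ℝ) (hR : 0 < R) (k m : ℕ) (hk : 1 ≤ k) (hkm : k ≤ m) (hmd : m ≤ d) :
    let δ : ℕ → ℝ := fun n =>
      (∏ i ∈ Finset.range n, σsq i) ^ ((1 : ℝ) / n) * (2 : ℝ) ^ (-2 * R / n)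
    δ k ≤ σsq (k - 1) →
    k * δ k + ∑ j ∈ Finset.Ico k d, σsq j ≥
      m * δ m + ∑ j ∈ Finset.Ico m d, σsq j :=
  truncated_water_filling_monotone_general d σsq hpos R k m hk hkm hmd
end
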